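/- Let B be a left semi-brace such that E is an ideal of B. Then the generalized socle Zoc(B) = Soc(B) + E is an ideal of B. -/
import Mathlib


/-- A left semi-brace: `(B,+)` is a left cancellative semigroup, `(B,*)` is a group
(whose identity `1` plays the role of `0` in the additive notation of the paper, and
`a⁻¹` plays the role of `a⁻`), and `a ∘ (b + c) = a ∘ b + a ∘ (a⁻ + c)` holds. -/
class LeftSemiBrace (B : Type*) extends Group B, Add B where
  add_assoc : ∀ a b c : B, a + b + c = a + (b + c)
  add_left_cancel : ∀ a b c : B, a + b = a + c → b = c
  circ_add : ∀ a b c : B, a * (b + c) = a * b + a * (a⁻¹ + c)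

namespace LeftSemiBrace

variable {B : Type*} [LeftSemiBrace B]

/-- The set `E` of additive idempotents. -/
def E (B : Type*) [LeftSemiBrace B] : Set B := {e | e + e = e}

/-- The set `G = B + 0`. -/
def G (B : Type*) [LeftSemiBrace B] : Set B := {x | ∃ b : B, x = b + 1}

/-- `λ_a (b) = a ∘ (a⁻ + b)`. -/
def lam (a b : B) : B := a * (a⁻¹ + b)

/-- `ρ_b (a) = (a⁻ + b)⁻ ∘ b`. -/
def rho (b a : B) : B := (a⁻¹ + b)⁻¹ * b

/-- `a · b = λ_a(a⁻) + a ∘ b + λ_b(b⁻)`. -/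
def dot (a b : B) : B := lam a a⁻¹ + a * b + lam b b⁻¹

/-- The group part `g_b = b + 0` of an element `b`. -/
def gp (b : B) : B := b + 1

/-- The additive inverse (within the group `(G,+)`) of the group part of an element:
for `g ∈ G` one has `neg g = -g`, since `-g_a = λ_a(a⁻) = a ∘ (a⁻ + a⁻)`. -/
def neg (a : B) : B := a * (a⁻¹ + a⁻¹)

/-- The idempotent part `e_b = -g_b + b` of an element `b`. -/
def ep (b : B) : B := neg (gp b) + b

/-- `S` is a subsemigroup of `(B,+)`. -/
def IsAddSubsemigroup (S : Set B) : Prop := ∀ x ∈ S, ∀ y ∈ S, x + y ∈ S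

/-- `S` is a subgroup of the multiplicative group `(B,∘)`. -/
def IsCircSubgroup (S : Set B) : Prop :=
  (1 : B) ∈ S ∧ (∀ x ∈ S, ∀ y ∈ S, x * y ∈ S) ∧ ∀ x ∈ S, x⁻¹ ∈ S

/-- `S` is a normal subgroup of the multiplicative group `(B,∘)`. -/
def IsCircNormal (S : Set B) : Prop :=
  IsCircSubgroup S ∧ ∀ x ∈ S, ∀ b : B, b * x * b⁻¹ ∈ S

/-- `S` is a subgroup of the group `(G,+)`. -/
def IsAddSubgroupOfG (S : Set B) : Prop :=
  S ⊆ G B ∧ (1 : B) ∈ S ∧ (∀ x ∈ S, ∀ y ∈ S, x + y ∈ S) ∧ ∀ x ∈ S, neg x ∈ S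

/-- `S` is a normal subgroup of the group `(G,+)`. -/
def IsAddNormalSubgroupOfG (S : Set B) : Prop :=
  IsAddSubgroupOfG S ∧ ∀ g ∈ G B, ∀ x ∈ S, g + x + neg g ∈ S

/-- `I` is an ideal of the left semi-brace `B` (Definition 17 of Catino–Colazzo–Stefanelli):
`I` is a subsemigroup of `(B,+)`, a normal subgroup of `(B,∘)`, `I ∩ G` is a normal
subgroup of `(G,+)`, `ρ_b(n) ∈ I` for all `b ∈ B`, `n ∈ I ∩ G`, and `λ_g(e) ∈ I` for all
`g ∈ G`, `e ∈ I ∩ E`. -/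
def IsIdeal (I : Set B) : Prop :=
  IsAddSubsemigroup I ∧ IsCircNormal I ∧ IsAddNormalSubgroupOfG (I ∩ G B) ∧
    (∀ b : B, ∀ n ∈ I ∩ G B, rho b n ∈ I) ∧
    (∀ g ∈ G B, ∀ e ∈ I ∩ E B, lam g e ∈ I)

/-- `I` is a left ideal of the left semi-brace `B`. -/
def IsLeftIdeal (I : Set B) : Prop :=
  (∀ x ∈ I, x + 1 ∈ I) ∧ IsAddSubgroupOfG (I ∩ G B) ∧
    (∀ g ∈ G B, ∀ x ∈ I, lam g x ∈ I) ∧ IsCircSubgroup I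

/-- The subgroup of `(G,+)` generated by a subset `S` of `G`. -/
def addClosure (S : Set B) : Set B :=
  ⋂₀ {T : Set B | S ⊆ T ∧ (1 : B) ∈ T ∧ (∀ x ∈ T, ∀ y ∈ T, x + y ∈ T) ∧ ∀ x ∈ T, neg x ∈ T}

/-- `X · Y`: the subgroup of `(G,+)` generated by `{x · y : x ∈ X, y ∈ Y}`. -/
def dotSet (X Y : Set B) : Set B := addClosure {z | ∃ x ∈ X, ∃ y ∈ Y, z = dot x y}

/-- `S + E = {s + e : s ∈ S, e ∈ E}`. -/
def addE (S : Set B) : Set B := {z | ∃ s ∈ S, ∃ e ∈ E B, z = s + e}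

/-- The right series of `B`: `rightSeries B n = B^(n+1)`, where `B^(1) = B` and
`B^(n+1) = B^(n) · B + E`. -/
def rightSeries (B : Type*) [LeftSemiBrace B] : ℕ → Set B
  | 0 => Set.univ
  | n + 1 => addE (dotSet (rightSeries B n) Set.univ)

/-- The left series of `B`: `leftSeries B n = B^(n+1)`, where `B^1 = B` and
`B^(n+1) = B · B^n + E`. -/
def leftSeries (B : Type*) [LeftSemiBrace B] : ℕ → Set B
  | 0 => Set.univ
  | n + 1 => addE (dotSet Set.univ (leftSeries B n))

/-- The right series of the skew left brace `G`: `rightSeriesG B n = G^(n+1)`, where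
`G^(1) = G` and `G^(n+1) = G^(n) · G`. -/
def rightSeriesG (B : Type*) [LeftSemiBrace B] : ℕ → Set B
  | 0 => G B
  | n + 1 => dotSet (rightSeriesG B n) (G B)

/-- The series `bracketSeries B n = B^[n+1]`, where `B^[1] = B` and `B^[n+1] = H_n + E`
with `H_n` the subgroup of `(G,+)` generated by `⋃_{i=1}^{n} B^[i] · B^[n+1-i]`. -/
def bracketSeries (B : Type*) [LeftSemiBrace B] : ℕ → Set B
  | 0 => Set.univ
  | n + 1 =>
      addE (addClosure (⋃ i : Fin (n + 1),
        dotSet (bracketSeries B i.1) (bracketSeries B (n - i.1))))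
  decreasing_by
  · exact i.isLt
  · exact Nat.lt_succ_of_le (Nat.sub_le n i.1)

/-- The socle `Soc(B) = {a ∈ B : ρ_a = ρ_0, λ_a = λ_0}`. -/
def Soc (B : Type*) [LeftSemiBrace B] : Set B :=
  {a | rho a = rho (1 : B) ∧ lam a = lam (1 : B)}

/-- The generalized socle `Zoc(B) = Soc(B) + E`. -/
def Zoc (B : Type*) [LeftSemiBrace B] : Set B :=
  {z | ∃ a ∈ Soc B, ∃ e ∈ E B, z = a + e}

/-- The lower central series of the group `(G,+)`:  `γ_1 = G` and `γ_{n+1}` is the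
subgroup of `(G,+)` generated by the additive commutators `-x - y + x + y` with
`x ∈ γ_n`, `y ∈ G`. -/
def lowerCentralSeriesG (B : Type*) [LeftSemiBrace B] : ℕ → Set B
  | 0 => G B
  | n + 1 => addClosure
      {z | ∃ x ∈ lowerCentralSeriesG B n, ∃ y ∈ G B, z = neg x + neg y + x + y}

/-- The group `(G,+)` is nilpotent. -/
def IsNilpotentGAdd (B : Type*) [LeftSemiBrace B] : Prop :=
  ∃ n : ℕ, lowerCentralSeriesG B n = {(1 : B)}

/-! ### Auxiliary lemmas -/

lemma one_add_eq (a : B) : 1 + a = a := by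
  have h := circ_add (1:B) 1 a
  simp only [one_mul, inv_one] at h
  exact (add_left_cancel 1 a (1+a) h).symm

lemma lam_one_apply (b : B) : lam 1 b = b := by
  simp only [lam, inv_one, one_mul, one_add_eq]

lemma lam_comp (a b c : B) : lam a (lam b c) = lam (a * b) c := by
  have h : b * (b⁻¹ * a⁻¹ + c) = a⁻¹ + lam b c := by
    rw [circ_add b (b⁻¹ * a⁻¹) c, mul_inv_cancel_left]; rfl
  show a * (a⁻¹ + lam b c) = (a*b) * ((a*b)⁻¹ + c)
  rw [mul_inv_rev, mul_assoc, h]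

lemma lam_lam_inv (a c : B) : lam a (lam a⁻¹ c) = c := by
  rw [lam_comp, mul_inv_cancel, lam_one_apply]

lemma add_eq_mul_lam (a b : B) : a + b = a * lam a⁻¹ b := by
  show a + b = a * (a⁻¹ * (a⁻¹⁻¹ + b))
  rw [inv_inv, mul_inv_cancel_left]

lemma lam_add (a b c : B) : lam a (b + c) = lam a b + lam a c := by
  show a * (a⁻¹ + (b + c)) = a * (a⁻¹ + b) + a * (a⁻¹ + c)
  rw [← add_assoc]
  exact circ_add a (a⁻¹+b) c

lemma mul_add_one (u z : B) : u * z + 1 = u * (z + lam u⁻¹ 1) := by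
  rw [circ_add u z (lam u⁻¹ 1)]
  rw [show u * (u⁻¹ + lam u⁻¹ 1) = lam u (lam u⁻¹ 1) from rfl, lam_lam_inv]

lemma add_neg_self (a : B) : a + neg a = 1 := by
  have h := circ_add a 1 a⁻¹
  rw [one_add_eq, mul_one, mul_inv_cancel] at h
  exact h.symm

lemma decomp (x : B) : (x + 1) + lam x 1 = x := by
  have h := circ_add x 1 1
  rw [one_add_eq 1, mul_one] at h
  rw [add_assoc, one_add_eq]
  show x + x * (x⁻¹ + 1) = x
  exact h.symm

lemma one_mem_E : (1:B) ∈ E B := one_add_eq 1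

lemma lam_mem_E (a : B) {e : B} (he : e ∈ E B) : lam a e ∈ E B := by
  have h : lam a e + lam a e = lam a (e + e) := (lam_add a e e).symm
  show lam a e + lam a e = lam a e
  rw [h, he]

lemma E_add_one {e : B} (he : e ∈ E B) : e + 1 = 1 := by
  have hi : (e+1) + (e+1) = e+1 := by
    rw [add_assoc e 1 (e+1), one_add_eq, ← add_assoc, he]
  have h1 : (e+1) + ((e+1) + neg (e+1)) = 1 := by
    rw [← add_assoc, hi, add_neg_self]
  rw [add_neg_self] at h1
  -- h1 : (e+1) + 1 = 1
  rw [add_assoc, one_add_eq 1] at h1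
  exact h1

lemma G_add_one {g : B} (hg : g ∈ G B) : g + 1 = g := by
  obtain ⟨b, rfl⟩ := hg
  rw [add_assoc, one_add_eq 1]

lemma soc_lam {a : B} (ha : a ∈ Soc B) (x : B) : lam a x = x := by
  have h := congrFun ha.2 x
  rw [h, lam_one_apply]

lemma soc_lam_inv {a : B} (ha : a ∈ Soc B) (x : B) : lam a⁻¹ x = x :=
  (soc_lam ha (lam a⁻¹ x)).symm.trans (lam_lam_inv a x)

lemma soc_add {a : B} (ha : a ∈ Soc B) (y : B) : a + y = a * y := by
  rw [add_eq_mul_lam, soc_lam_inv ha]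

lemma soc_inv_add {a : B} (ha : a ∈ Soc B) (y : B) : a⁻¹ + y = a⁻¹ * y := by
  rw [add_eq_mul_lam, inv_inv, soc_lam ha]

lemma soc_add_one {a : B} (ha : a ∈ Soc B) : a + 1 = a := by
  rw [soc_add ha, mul_one]

lemma soc_mem_G {a : B} (ha : a ∈ Soc B) : a ∈ G B := ⟨a, (soc_add_one ha).symm⟩

lemma one_mem_soc : (1:B) ∈ Soc B := ⟨rfl, rfl⟩

lemma soc_rho {a : B} (ha : a ∈ Soc B) (y : B) : y + a = a * (y + 1) := by
  have h := congrFun ha.1 y⁻¹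
  simp only [rho, inv_inv, mul_one] at h
  -- h : (y + a)⁻¹ * a = (y + 1)⁻¹
  have h2 : y + a = ((y+1)⁻¹ * a⁻¹)⁻¹ := by
    rw [← h, mul_inv_rev, inv_inv, mul_inv_rev, inv_inv, mul_inv_cancel_left]
  rw [h2, mul_inv_rev, inv_inv, inv_inv]

lemma mem_soc {a : B} (hlam : ∀ x, lam a x = x) (hrho : ∀ y, y + a = a * (y+1)) :
    a ∈ Soc B := by
  constructor
  · funext x
    show (x⁻¹ + a)⁻¹ * a = (x⁻¹ + 1)⁻¹ * 1
    rw [hrho x⁻¹, mul_one, mul_inv_rev, inv_mul_cancel_right]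
  · funext x
    show a * (a⁻¹ + x) = 1 * (1⁻¹ + x)
    rw [show a * (a⁻¹ + x) = lam a x from rfl, hlam, inv_one, one_mul, one_add_eq]

lemma soc_lam_eq {a : B} (ha : a ∈ Soc B) (c : B) : lam c a = c * a * (c⁻¹ + 1) := by
  show c * (c⁻¹ + a) = c * a * (c⁻¹ + 1)
  rw [soc_rho ha c⁻¹, mul_assoc]

lemma lam_inv_one_comm {a : B} (ha : a ∈ Soc B) (b : B) :
    lam (b*a)⁻¹ (1:B) = lam b⁻¹ 1 := by
  rw [mul_inv_rev, ← lam_comp, soc_lam_inv ha]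

lemma soc_conj_gp {a : B} (ha : a ∈ Soc B) (b : B) : lam b a + 1 = b * a * b⁻¹ := by
  rw [soc_lam_eq ha b, mul_add_one, lam_inv_one_comm ha, decomp]

lemma soc_mul_mem {a b : B} (ha : a ∈ Soc B) (hb : b ∈ Soc B) : a * b ∈ Soc B := by
  have comm : b * a = a * b := by
    rw [← soc_add hb a, soc_rho ha b, soc_add_one hb]
  apply mem_soc
  · intro x; rw [← lam_comp, soc_lam hb, soc_lam ha]
  · intro y
    have h1 : a * (y+1) + 1 = a * (y+1) := by
      rw [← soc_add ha (y+1), add_assoc, add_assoc, one_add_eq 1]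
    calc y + a * b = y + (a + b) := by rw [soc_add ha]
      _ = (y + a) + b := (add_assoc y a b).symm
      _ = a * (y+1) + b := by rw [soc_rho ha]
      _ = b * (a * (y+1) + 1) := soc_rho hb _
      _ = b * (a * (y+1)) := by rw [h1]
      _ = a * b * (y+1) := by rw [← mul_assoc, comm]

lemma soc_inv_mem {a : B} (ha : a ∈ Soc B) : a⁻¹ ∈ Soc B := by
  apply mem_soc
  · exact soc_lam_inv ha
  · intro z
    have h := soc_rho ha (z + a⁻¹)
    rw [add_assoc, soc_inv_add ha a, inv_mul_cancel, add_assoc, soc_inv_add ha 1,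
      mul_one] at h
    -- h : z + 1 = a * (z + a⁻¹)
    rw [h, inv_mul_cancel_left]

lemma soc_conj_mem {a : B} (ha : a ∈ Soc B) (b : B) : b * a * b⁻¹ ∈ Soc B := by
  apply mem_soc
  · intro x
    rw [← lam_comp, ← lam_comp, soc_lam ha, lam_comp, mul_inv_cancel, lam_one_apply]
  · intro y
    have lhs : y + b * a * b⁻¹ = (b*a) * (b⁻¹*y + lam b⁻¹ 1) := by
      calc y + b*a*b⁻¹ = y + (lam b a + 1) := by rw [soc_conj_gp ha b]
        _ = (y + lam b a) + 1 := (add_assoc y _ 1).symm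
        _ = (y * lam y⁻¹ (lam b a)) + 1 := by rw [← add_eq_mul_lam]
        _ = (y * lam (y⁻¹ * b) a) + 1 := by rw [lam_comp]
        _ = (y * ((y⁻¹*b) * a * ((y⁻¹*b)⁻¹ + 1))) + 1 := by rw [soc_lam_eq ha]
        _ = ((b*a) * (b⁻¹*y + 1)) + 1 := by
              rw [mul_inv_rev, inv_inv, ← mul_assoc, ← mul_assoc, mul_inv_cancel_left]
        _ = (b*a) * ((b⁻¹*y + 1) + lam (b*a)⁻¹ 1) := mul_add_one _ _
        _ = (b*a) * ((b⁻¹*y + 1) + lam b⁻¹ 1) := by rw [lam_inv_one_comm ha]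
        _ = (b*a) * (b⁻¹*y + lam b⁻¹ 1) := by rw [add_assoc, one_add_eq]
    have rhs : b * a * b⁻¹ * (y + 1) = (b*a) * (b⁻¹*y + lam b⁻¹ 1) := by
      rw [mul_assoc (b*a) b⁻¹ (y+1), circ_add b⁻¹ y 1]
      rfl
    rw [lhs, rhs]

lemma mem_Zoc_iff {x : B} : x ∈ Zoc B ↔ ∃ a ∈ Soc B, ∃ e ∈ E B, x = a * e := by
  constructor
  · rintro ⟨a, ha, e, he, rfl⟩; exact ⟨a, ha, e, he, soc_add ha e⟩
  · rintro ⟨a, ha, e, he, rfl⟩; exact ⟨a, ha, e, he, (soc_add ha e).symm⟩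

lemma soc_subset_Zoc {a : B} (ha : a ∈ Soc B) : a ∈ Zoc B :=
  ⟨a, ha, 1, one_mem_E, (soc_add_one ha).symm⟩

lemma E_subset_Zoc {e : B} (he : e ∈ E B) : e ∈ Zoc B :=
  ⟨1, one_mem_soc, e, he, (one_add_eq e).symm⟩

lemma Zoc_inter_G {x : B} (h : x ∈ Zoc B ∩ G B) : x ∈ Soc B := by
  obtain ⟨⟨a, ha, e, he, rfl⟩, hG⟩ := h
  have h1 : (a + e) + 1 = a := by rw [add_assoc, E_add_one he, soc_add_one ha]
  rw [G_add_one hG] at h1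
  rw [h1]; exact ha

lemma soc_mem_ZG {a : B} (ha : a ∈ Soc B) : a ∈ Zoc B ∩ G B :=
  ⟨soc_subset_Zoc ha, soc_mem_G ha⟩
/-- if `E` is an ideal of `B`, then the generalized socle
`Zoc(B) = Soc(B) + E` is an ideal of `B`. -/
theorem Zoc_isIdeal (B : Type*) [LeftSemiBrace B] (hE : IsIdeal (E B)) :
    IsIdeal (Zoc B) := by
  obtain ⟨-, ⟨⟨-, hEmul, hEinv⟩, hEconj⟩, -, -, -⟩ := hE
  refine ⟨?_, ⟨⟨?_, ?_, ?_⟩, ?_⟩, ⟨⟨?_, ?_, ?_, ?_⟩, ?_⟩, ?_, ?_⟩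
  · -- additive subsemigroup
    rintro x ⟨a, ha, e, he, rfl⟩ y ⟨a', ha', e', he', rfl⟩
    have h1 : e + a' = a' := by rw [soc_rho ha' e, E_add_one he, mul_one]
    have h2 : (a+e)+(a'+e') = (a + a') + e' := by
      rw [add_assoc, ← add_assoc e a' e', h1, ← add_assoc]
    refine ⟨a + a', ?_, e', he', h2⟩
    rw [soc_add ha a']
    exact soc_mul_mem ha ha'
  · -- 1 ∈ Zoc
    exact soc_subset_Zoc one_mem_soc
  · -- mul closure
    intro x hx y hy
    obtain ⟨a, ha, e, he, rfl⟩ := mem_Zoc_iff.mp hx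
    obtain ⟨a', ha', e', he', rfl⟩ := mem_Zoc_iff.mp hy
    have hc : a'⁻¹ * e * a' ∈ E B := by
      have h := hEconj e he a'⁻¹
      rwa [inv_inv] at h
    exact mem_Zoc_iff.mpr ⟨a * a', soc_mul_mem ha ha', (a'⁻¹ * e * a') * e',
      hEmul _ hc _ he', by group⟩
  · -- inv closure
    intro x hx
    obtain ⟨a, ha, e, he, rfl⟩ := mem_Zoc_iff.mp hx
    exact mem_Zoc_iff.mpr ⟨a⁻¹, soc_inv_mem ha, a * e⁻¹ * a⁻¹,
      hEconj _ (hEinv e he) a, by group⟩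
  · -- conj closure
    intro x hx b
    obtain ⟨a, ha, e, he, rfl⟩ := mem_Zoc_iff.mp hx
    exact mem_Zoc_iff.mpr ⟨b * a * b⁻¹, soc_conj_mem ha b, b * e * b⁻¹,
      hEconj e he b, by group⟩
  · -- Zoc ∩ G ⊆ G
    exact Set.inter_subset_right
  · -- 1 ∈ Zoc ∩ G
    exact soc_mem_ZG one_mem_soc
  · -- add closure in Zoc ∩ G
    intro x hx y hy
    have ha := Zoc_inter_G hx
    have hb := Zoc_inter_G hy
    apply soc_mem_ZG
    rw [soc_add ha]
    exact soc_mul_mem ha hb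
  · -- neg closure
    intro x hx
    have ha := Zoc_inter_G hx
    have h : neg x = x⁻¹ := by
      show x * (x⁻¹ + x⁻¹) = x⁻¹
      rw [soc_inv_add ha, mul_inv_cancel_left]
    rw [h]
    exact soc_mem_ZG (soc_inv_mem ha)
  · -- normality in (G,+)
    intro g hg x hx
    have ha := Zoc_inter_G hx
    have h1 : g + x = x * g := by rw [soc_rho ha g, G_add_one hg]
    have h3 : x * (g + neg g) = x * g + lam x (neg g) := circ_add x g (neg g)
    rw [soc_lam ha, add_neg_self, mul_one] at h3
    -- h3 : x = x * g + neg g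
    rw [h1, ← h3]
    exact soc_mem_ZG ha
  · -- rho condition
    intro b n hn
    have ha := Zoc_inter_G hn
    show (n⁻¹ + b)⁻¹ * b ∈ Zoc B
    rw [soc_inv_add ha, mul_inv_rev, inv_inv, mul_assoc]
    have h := soc_conj_mem ha b⁻¹
    rw [inv_inv, mul_assoc] at h
    exact soc_subset_Zoc h
  · -- lam condition
    intro g _ e he
    exact E_subset_Zoc (lam_mem_E g he.2)

end LeftSemiBrace
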